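/- In the non-compliance SCM, the outcome under no prescription equals the outcome under no treatment: P(Y = 1 | do(P := 0), X = x) = P(Y = 1 | T = 0, X = x) for every x with P(X = x) > 0 and P(T = 0, X = x) > 0. -/

import Mathlib

/-! On `{X = x}` the event `T = 0` is `fT x N_T && P = false`, a function of the noises
`(P, N_T)` alone, while `Y = 1` becomes `fY x false U N_Y = true` and `X = x` is a function
of `(U, N_X)`. Joint independence makes the mass of `(P, N_T)`- and `(U, N_X, N_Y)`-events
factor, so conditioning additionally on an event of `(P, N_T)` (here `T = 0`, versus the
sure event under `do(P := 0)`) multiplies numerator and denominator by the same nonzero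
factor. -/

open Classical Finset

/-- Probability of an event in a finite probability space given by a mass function. -/
noncomputable def Pr {Ω : Type*} [Fintype Ω] (pr : Ω → ℝ) (A : Ω → Prop) : ℝ :=
  ∑ ω, if A ω then pr ω else 0

/-- Conditional probability `P(A | B)`. -/
noncomputable def cPr {Ω : Type*} [Fintype Ω] (pr : Ω → ℝ) (A B : Ω → Prop) : ℝ :=
  Pr pr (fun ω => A ω ∧ B ω) / Pr pr B

section

variable {Ω α β : Type*} [Fintype Ω] (pr : Ω → ℝ)

lemma Pr_congr {A B : Ω → Prop} (h : ∀ ω, A ω ↔ B ω) : Pr pr A = Pr pr B := by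
  simp only [Pr, h]

lemma cPr_congr {A A' B B' : Ω → Prop} (hA : ∀ ω, B ω → (A ω ↔ A' ω))
    (hB : ∀ ω, B ω ↔ B' ω) : cPr pr A B = cPr pr A' B' := by
  have hAB : ∀ ω, (A ω ∧ B ω) ↔ (A' ω ∧ B' ω) := fun ω => by
    rw [← hB ω]; exact and_congr_left (hA ω)
  rw [cPr, cPr, Pr_congr pr hB, Pr_congr pr hAB]

lemma Pr_comp_eq_sum (f : Ω → α) {S : Finset α} (hS : ∀ ω, f ω ∈ S) (E : α → Prop) :
    Pr pr (fun ω => E (f ω)) = ∑ a ∈ S, if E a then Pr pr (fun ω => f ω = a) else 0 := by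
  unfold Pr
  rw [← sum_fiberwise_of_maps_to (fun ω _ => hS ω)]
  refine sum_congr rfl fun a _ => ?_
  rw [sum_filter]
  split_ifs with hE
  · exact sum_congr rfl fun ω _ => by split_ifs <;> simp_all
  · exact sum_eq_zero fun ω _ => by split_ifs <;> simp_all

variable {g : Ω → α} {h : Ω → β} {φ : α → ℝ} {ψ : β → ℝ}

lemma Pr_comp_and_comp_eq_mul
    (hfac : ∀ a b, Pr pr (fun ω => g ω = a ∧ h ω = b) = φ a * ψ b) (E : α → Prop)
    (F : β → Prop) :
    Pr pr (fun ω => E (g ω) ∧ F (h ω))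
      = (∑ a ∈ univ.image g, if E a then φ a else 0)
        * ∑ b ∈ univ.image h, if F b then ψ b else 0 := by
  have hmem : ∀ ω, (g ω, h ω) ∈ univ.image g ×ˢ univ.image h := fun ω =>
    mem_product.2 ⟨mem_image_of_mem g (mem_univ ω), mem_image_of_mem h (mem_univ ω)⟩
  rw [Pr_comp_eq_sum pr (fun ω => (g ω, h ω)) hmem (fun c => E c.1 ∧ F c.2), sum_product,
    sum_mul_sum]
  refine sum_congr rfl fun a _ => sum_congr rfl fun b _ => ?_
  simp only [Prod.ext_iff, hfac]
  by_cases hE : E a <;> by_cases hF : F b <;> simp [hE, hF]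

lemma cPr_comp_and_comp_eq_div
    (hfac : ∀ a b, Pr pr (fun ω => g ω = a ∧ h ω = b) = φ a * ψ b) (A B : β → Prop)
    {E : α → Prop} (hpos : 0 < Pr pr (fun ω => E (g ω) ∧ B (h ω))) :
    cPr pr (fun ω => A (h ω)) (fun ω => E (g ω) ∧ B (h ω))
      = (∑ b ∈ univ.image h, if A b ∧ B b then ψ b else 0)
        / ∑ b ∈ univ.image h, if B b then ψ b else 0 := by
  rw [Pr_comp_and_comp_eq_mul pr hfac] at hpos
  have hE : (∑ a ∈ univ.image g, if E a then φ a else 0) ≠ 0 := left_ne_zero_of_mul hpos.ne'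
  rw [cPr, Pr_congr pr (B := fun ω => E (g ω) ∧ (A (h ω) ∧ B (h ω))) fun ω => by tauto,
    Pr_comp_and_comp_eq_mul pr hfac E (fun b => A b ∧ B b), Pr_comp_and_comp_eq_mul pr hfac E B,
    mul_div_mul_left _ _ hE]
  -- the two sides differ only in the `Decidable` instance of `A b ∧ B b`
  congr!

lemma cPr_comp_and_comp_eq_cPr_comp_and_comp
    (hfac : ∀ a b, Pr pr (fun ω => g ω = a ∧ h ω = b) = φ a * ψ b) (A B : β → Prop)
    {E E' : α → Prop} (hpos : 0 < Pr pr (fun ω => E (g ω) ∧ B (h ω)))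
    (hpos' : 0 < Pr pr (fun ω => E' (g ω) ∧ B (h ω))) :
    cPr pr (fun ω => A (h ω)) (fun ω => E (g ω) ∧ B (h ω))
      = cPr pr (fun ω => A (h ω)) (fun ω => E' (g ω) ∧ B (h ω)) := by
  rw [cPr_comp_and_comp_eq_div pr hfac A B hpos, cPr_comp_and_comp_eq_div pr hfac A B hpos']

end

theorem stmt15_general
    {Ω 𝒰 𝒳 NXt NTt NYt : Type*} [Fintype Ω]
    (pr : Ω → ℝ)
    (NP : Ω → Bool) (NU : Ω → 𝒰) (NXn : Ω → NXt) (NTn : Ω → NTt) (NYn : Ω → NYt)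
    (fX : 𝒰 → NXt → 𝒳) (fT : 𝒳 → NTt → Bool) (fY : 𝒳 → Bool → 𝒰 → NYt → Bool)
    (P : Ω → Bool) (hP : P = NP)
    (U : Ω → 𝒰) (hU : U = NU)
    (X : Ω → 𝒳) (hX : X = fun ω => fX (U ω) (NXn ω))
    (T : Ω → Bool) (hT : T = fun ω => fT (X ω) (NTn ω) && P ω)
    (Y : Ω → Bool) (hY : Y = fun ω => fY (X ω) (T ω) (U ω) (NYn ω))
    (hindep : ∀ (a : Bool) (u : 𝒰) (nx : NXt) (nt : NTt) (ny : NYt),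
      Pr pr (fun ω => NP ω = a ∧ NU ω = u ∧ NXn ω = nx ∧ NTn ω = nt ∧ NYn ω = ny)
        = Pr pr (fun ω => NP ω = a) * Pr pr (fun ω => NU ω = u)
          * Pr pr (fun ω => NXn ω = nx) * Pr pr (fun ω => NTn ω = nt)
          * Pr pr (fun ω => NYn ω = ny))
    (x : 𝒳)
    (hx : 0 < Pr pr (fun ω => X ω = x))
    (hx0 : 0 < Pr pr (fun ω => T ω = false ∧ X ω = x)) :
    -- P(Y = 1 | do(P := 0), X = x): under do(P:=0), T ≡ 0 and Y = f_Y(X, 0, U, N_Y)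
    cPr pr (fun ω => fY (X ω) (fT (X ω) (NTn ω) && false) (U ω) (NYn ω) = true)
        (fun ω => X ω = x)
      = cPr pr (fun ω => Y ω = true) (fun ω => T ω = false ∧ X ω = x) := by
  subst hP hU
  have hfac : ∀ (p : Bool × NTt) (q : 𝒰 × NXt × NYt),
      Pr pr (fun ω => (P ω, NTn ω) = p ∧ (U ω, NXn ω, NYn ω) = q)
        = Pr pr (fun ω => P ω = p.1) * Pr pr (fun ω => NTn ω = p.2)
          * (Pr pr (fun ω => U ω = q.1) * Pr pr (fun ω => NXn ω = q.2.1)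
            * Pr pr (fun ω => NYn ω = q.2.2)) := by
    rintro ⟨a, nt⟩ ⟨u, nx, ny⟩
    rw [Pr_congr pr (B := fun ω => P ω = a ∧ U ω = u ∧ NXn ω = nx ∧ NTn ω = nt ∧ NYn ω = ny)
      fun ω => by simp only [Prod.ext_iff]; tauto, hindep]
    ring
  have hX_iff : ∀ ω, X ω = x ↔ True ∧ fX (U ω) (NXn ω) = x := by simp [hX]
  have hTX_iff : ∀ ω, (T ω = false ∧ X ω = x) ↔
      ((fT x (NTn ω) && P ω) = false ∧ fX (U ω) (NXn ω) = x) := by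
    intro ω
    simp only [hT, hX]
    constructor <;> rintro ⟨hT, rfl⟩ <;> exact ⟨hT, rfl⟩
  calc _ = cPr pr (fun ω => fY x false (U ω) (NYn ω) = true)
          (fun ω => True ∧ fX (U ω) (NXn ω) = x) :=
        cPr_congr pr (fun ω (hω : X ω = x) => by simp only [hω, Bool.and_false]) hX_iff
    _ = cPr pr (fun ω => fY x false (U ω) (NYn ω) = true)
          (fun ω => (fT x (NTn ω) && P ω) = false ∧ fX (U ω) (NXn ω) = x) :=
        cPr_comp_and_comp_eq_cPr_comp_and_comp pr (g := fun ω => (P ω, NTn ω))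
          (h := fun ω => (U ω, NXn ω, NYn ω)) hfac (fun q => fY x false q.1 q.2.2 = true)
          (fun q => fX q.1 q.2.1 = x) (E := fun _ => True)
          (E' := fun p => (fT x p.2 && p.1) = false)
          (hx.trans_eq (Pr_congr pr hX_iff)) (hx0.trans_eq (Pr_congr pr hTX_iff))
    _ = _ := (cPr_congr pr (fun ω (hω : T ω = false ∧ X ω = x) => by simp only [hY, hω])
        hTX_iff).symm

/-- In the non-compliance SCM, the outcome under no prescription equals
the outcome under no treatment: P(Y = 1 | do(P := 0), X = x) = P(Y = 1 | T = 0, X = x)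
for every x with P(X = x) > 0 and P(T = 0, X = x) > 0. -/
theorem stmt15
    {Ω 𝒰 𝒳 NXt NTt NYt : Type*} [Fintype Ω]
    (pr : Ω → ℝ) (hpr : ∀ ω, 0 ≤ pr ω) (hsum : ∑ ω, pr ω = 1)
    (NP : Ω → Bool) (NU : Ω → 𝒰) (NXn : Ω → NXt) (NTn : Ω → NTt) (NYn : Ω → NYt)
    (fX : 𝒰 → NXt → 𝒳) (fT : 𝒳 → NTt → Bool) (fY : 𝒳 → Bool → 𝒰 → NYt → Bool)
    (P : Ω → Bool) (hP : P = NP)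
    (U : Ω → 𝒰) (hU : U = NU)
    (X : Ω → 𝒳) (hX : X = fun ω => fX (U ω) (NXn ω))
    (T : Ω → Bool) (hT : T = fun ω => fT (X ω) (NTn ω) && P ω)
    (Y : Ω → Bool) (hY : Y = fun ω => fY (X ω) (T ω) (U ω) (NYn ω))
    (hindep : ∀ (a : Bool) (u : 𝒰) (nx : NXt) (nt : NTt) (ny : NYt),
      Pr pr (fun ω => NP ω = a ∧ NU ω = u ∧ NXn ω = nx ∧ NTn ω = nt ∧ NYn ω = ny)
        = Pr pr (fun ω => NP ω = a) * Pr pr (fun ω => NU ω = u)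
          * Pr pr (fun ω => NXn ω = nx) * Pr pr (fun ω => NTn ω = nt)
          * Pr pr (fun ω => NYn ω = ny))
    (x : 𝒳)
    (hx : 0 < Pr pr (fun ω => X ω = x))
    (hx0 : 0 < Pr pr (fun ω => T ω = false ∧ X ω = x)) :
    -- P(Y = 1 | do(P := 0), X = x): under do(P:=0), T ≡ 0 and Y = f_Y(X, 0, U, N_Y)
    cPr pr (fun ω => fY (X ω) (fT (X ω) (NTn ω) && false) (U ω) (NYn ω) = true)
        (fun ω => X ω = x)
      = cPr pr (fun ω => Y ω = true) (fun ω => T ω = false ∧ X ω = x) :=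
  stmt15_general pr NP NU NXn NTn NYn fX fT fY P hP U hU X hX T hT Y hY hindep x hx hx0
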